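/- Let n, N ≥ 1, let λ_1,…,λ_n > 0 with Σ_k λ_k = 1, let ρ := diag(λ_1,…,λ_n), let A_1,…,A_N be Hermitian n×n complex matrices, and let m : (0,∞)×(0,∞) → ℝ satisfy 0 < m(x,y) ≤ (x+y)/2 for all x,y > 0. Then det G(m) = det Cov if and only if the centered matrices (A_1)₀, …, (A_N)₀ are linearly dependent over ℝ. -/

import Mathlib

/-!
Both `Cov` and `G` are weighted Gram matrices `∑ₖₗ w k l · Re (a h k l · conj (a j k l))` of the
centered observables, with weights `λₖ` and `λₖ - m(λₖ, λₗ)`. For a Hermitian family only the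
symmetrization of the weight matters, and for a nonnegative weight the matrix is the Gram matrix
of the vectors `(√(w k l) · a k l)` in a real Euclidean space. So `G` (symmetrized weight
`(λₖ + λₗ)/2 - (m(λₖ, λₗ) + m(λₗ, λₖ))/2 ≥ 0`) is positive semidefinite, while `Cov - G`
(weight `m > 0`) is positive definite as soon as the `A₀` are independent; then
`det G < det (G + (Cov - G))`. If the `A₀` are dependent, every such Gram matrix is singular.
-/

open Matrix
open scoped ComplexConjugate

namespace Matrix

section Determinant

variable {n : Type*} [Fintype n] [DecidableEq n]

theorem IsHermitian.det_add_one {K : Matrix n n ℝ} (hK : K.IsHermitian) :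
    (K + 1).det = ∏ i, (hK.eigenvalues i + 1) := by
  have : cfc (fun x : ℝ => x + 1) K = K + 1 := by
    rw [cfc_add_const 1 (fun x => x) K, cfc_id' ℝ K, Algebra.algebraMap_eq_smul_one, one_smul]
  rw [← this, hK.cfc_eq]
  simp [IsHermitian.cfc, -Unitary.conjStarAlgAut_apply]

theorem PosSemidef.det_lt_det_add_one [Nonempty n] {K : Matrix n n ℝ} (hK : K.PosSemidef) :
    K.det < (K + 1).det := by
  rw [hK.isHermitian.det_add_one, hK.isHermitian.det_eq_prod_eigenvalues]
  simp only [RCLike.ofReal_real_eq_id, id_eq]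
  by_cases hzero : ∃ i, hK.isHermitian.eigenvalues i = 0
  · obtain ⟨i, hi⟩ := hzero
    rw [Finset.prod_eq_zero (Finset.mem_univ i) hi]
    exact Finset.prod_pos fun j _ => by linarith [hK.eigenvalues_nonneg j]
  · push Not at hzero
    exact Finset.prod_lt_prod_of_nonempty
      (fun j _ => (hK.eigenvalues_nonneg j).lt_of_ne' (hzero j))
      (fun j _ => lt_add_one _) Finset.univ_nonempty

open scoped MatrixOrder in
theorem PosSemidef.det_lt_det_add_of_posDef [Nonempty n] {A B : Matrix n n ℝ}
    (hA : A.PosSemidef) (hB : B.PosDef) : A.det < (A + B).det := by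
  obtain ⟨C, rfl⟩ := CStarAlgebra.nonneg_iff_eq_star_mul_self.mp hB.posSemidef.nonneg
  have hC : IsUnit C.det :=
    isUnit_iff_ne_zero.mpr fun h => hB.det_pos.ne' (by rw [det_mul, h, mul_zero])
  have hCt : IsUnit (Cᴴ).det := by simpa [det_conjTranspose] using hC
  set K := (C⁻¹)ᴴ * A * C⁻¹
  have hAK : A = Cᴴ * K * C := by
    simp only [K, conjTranspose_nonsing_inv, Matrix.mul_assoc, nonsing_inv_mul _ hC, mul_one]
    rw [← Matrix.mul_assoc, mul_nonsing_inv _ hCt, one_mul]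
  have hdet : ∀ X : Matrix n n ℝ, (Cᴴ * X * C).det = (Cᴴ * C).det * X.det := by
    intro X; simp only [det_mul]; ring
  have hABK : A + star C * C = Cᴴ * (K + 1) * C := by
    rw [hAK, Matrix.mul_add, Matrix.add_mul, Matrix.mul_one, ← hAK]; rfl
  rw [hABK, hdet, hAK, hdet]
  exact mul_lt_mul_of_pos_left (hA.conjTranspose_mul_mul_same _).det_lt_det_add_one hB.det_pos

end Determinant

theorem IsHermitian.isSelfAdjoint_trace_mul {n R : Type*} [Fintype n] [CommSemiring R] [StarRing R]
    {A B : Matrix n n R} (hA : A.IsHermitian) (hB : B.IsHermitian) :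
    IsSelfAdjoint (A * B).trace := by
  rw [IsSelfAdjoint, ← trace_conjTranspose, conjTranspose_mul, hA.eq, hB.eq, trace_mul_comm]

theorem IsHermitian.sub_trace_mul_smul_one {n R : Type*} [Fintype n] [DecidableEq n] [CommRing R]
    [StarRing R] {ρ A : Matrix n n R} (hρ : ρ.IsHermitian) (hA : A.IsHermitian) :
    (A - (ρ * A).trace • 1).IsHermitian :=
  hA.sub (isHermitian_one.smul (hρ.isSelfAdjoint_trace_mul hA))

variable {ι ι' κ : Type*}

theorem IsHermitian.re_trace_diagonal_mul_mul [Fintype ι] [DecidableEq ι] (d : ι → ℝ)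
    (X : Matrix ι ι ℂ) {Y : Matrix ι ι ℂ} (hY : Y.IsHermitian) :
    (diagonal (fun k => (d k : ℂ)) * X * Y).trace.re
      = ∑ k, ∑ l, d k * (X k l * conj (Y k l)).re := by
  conv_lhs => rw [← hY.eq]
  simp only [Matrix.mul_assoc, trace, diag, diagonal_mul]
  simp [mul_apply, Finset.mul_sum, Complex.re_sum]

noncomputable def sqrtWeighted (w : ι → ι' → ℝ) :
    Matrix ι ι' ℂ →ₗ[ℝ] PiLp 2 (fun _ : ι × ι' => ℂ) where
  toFun X := WithLp.toLp 2 fun p => (√(w p.1 p.2) : ℂ) * X p.1 p.2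
  map_add' X Y := by ext p; simp [mul_add]
  map_smul' c X := by
    ext p
    simp only [smul_apply, Complex.real_smul, Real.ringHom_apply, PiLp.smul_apply]
    ring

theorem sqrtWeighted_injective {w : ι → ι' → ℝ} (hw : ∀ k l, 0 < w k l) :
    Function.Injective (sqrtWeighted w) := by
  intro X Y hXY
  ext k l
  have := congr_arg (fun v => v (k, l)) hXY
  simpa [sqrtWeighted, (Real.sqrt_pos.mpr (hw k l)).ne'] using this

section WeightedGram

variable [Fintype ι] [Fintype ι']

def weightedGram (w : ι → ι' → ℝ) (a : κ → Matrix ι ι' ℂ) : Matrix κ κ ℝ :=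
  of fun h j => ∑ k, ∑ l, w k l * (a h k l * conj (a j k l)).re

@[simp]
theorem weightedGram_apply (w : ι → ι' → ℝ) (a : κ → Matrix ι ι' ℂ) (h j : κ) :
    weightedGram w a h j = ∑ k, ∑ l, w k l * (a h k l * conj (a j k l)).re :=
  rfl

theorem weightedGram_add (u v : ι → ι' → ℝ) (a : κ → Matrix ι ι' ℂ) :
    weightedGram (u + v) a = weightedGram u a + weightedGram v a := by
  ext h j
  simp only [weightedGram_apply, add_apply, Pi.add_apply, add_mul, Finset.sum_add_distrib]

theorem weightedGram_eq_gram {w : ι → ι' → ℝ} (hw : ∀ k l, 0 ≤ w k l)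
    (a : κ → Matrix ι ι' ℂ) :
    weightedGram w a = gram ℝ (sqrtWeighted w ∘ a) := by
  ext h j
  rw [gram_apply, real_inner_comm, PiLp.inner_apply, Fintype.sum_prod_type, weightedGram_apply]
  refine Finset.sum_congr rfl fun k _ => Finset.sum_congr rfl fun l _ => ?_
  simp only [sqrtWeighted, LinearMap.coe_mk, AddHom.coe_mk, Function.comp_apply, Complex.inner]
  rw [map_mul, Complex.conj_ofReal, mul_mul_mul_comm, ← Complex.ofReal_mul,
    Real.mul_self_sqrt (hw k l), Complex.re_ofReal_mul]

theorem weightedGram_symmetrize {a : κ → Matrix ι ι ℂ} (ha : ∀ h, (a h).IsHermitian)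
    (w : ι → ι → ℝ) :
    weightedGram (fun k l => (w k l + w l k) / 2) a = weightedGram w a := by
  ext h j
  have hswap : ∑ k, ∑ l, w l k * (a h k l * conj (a j k l)).re
      = ∑ k, ∑ l, w k l * (a h k l * conj (a j k l)).re := by
    rw [Finset.sum_comm]
    refine Finset.sum_congr rfl fun k _ => Finset.sum_congr rfl fun l _ => ?_
    rw [← (ha h).apply k l, ← (ha j).apply k l]
    simp [Complex.mul_re]
  simp only [weightedGram_apply, add_div, add_mul, Finset.sum_add_distrib, div_mul_eq_mul_div,
    ← Finset.sum_div, hswap]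
  ring

theorem posSemidef_weightedGram [Finite κ] {a : κ → Matrix ι ι ℂ}
    (ha : ∀ h, (a h).IsHermitian) {w : ι → ι → ℝ} (hw : ∀ k l, 0 ≤ w k l + w l k) :
    (weightedGram w a).PosSemidef := by
  rw [← weightedGram_symmetrize ha, weightedGram_eq_gram fun k l => by linarith [hw k l]]
  exact posSemidef_gram ℝ _

theorem posDef_weightedGram [Finite κ] {a : κ → Matrix ι ι' ℂ}
    (ha : LinearIndependent ℝ a) {w : ι → ι' → ℝ} (hw : ∀ k l, 0 < w k l) :
    (weightedGram w a).PosDef := by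
  rw [weightedGram_eq_gram fun k l => (hw k l).le]
  exact posDef_gram_of_linearIndependent
    (ha.map' _ (LinearMap.ker_eq_bot.mpr (sqrtWeighted_injective hw)))

theorem det_weightedGram_eq_zero [Fintype κ] [DecidableEq κ] {a : κ → Matrix ι ι ℂ}
    (ha : ∀ h, (a h).IsHermitian) (hdep : ¬LinearIndependent ℝ a) {w : ι → ι → ℝ}
    (hw : ∀ k l, 0 ≤ w k l + w l k) : (weightedGram w a).det = 0 := by
  rw [← weightedGram_symmetrize ha, weightedGram_eq_gram fun k l => by linarith [hw k l]]
  exact not_not.mp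
    (mt det_gram_ne_zero_iff_linearIndependent.mp (mt (LinearIndependent.of_comp _) hdep))

theorem det_weightedGram_eq_det_weightedGram_add_iff [Fintype κ] [DecidableEq κ] [Nonempty κ]
    {a : κ → Matrix ι ι ℂ} (ha : ∀ h, (a h).IsHermitian) {u v : ι → ι → ℝ}
    (hu : ∀ k l, 0 ≤ u k l + u l k) (hv : ∀ k l, 0 < v k l) :
    (weightedGram u a).det = (weightedGram (u + v) a).det ↔ ¬LinearIndependent ℝ a := by
  refine ⟨fun hdet hli => ?_, fun hdep => ?_⟩
  · rw [weightedGram_add] at hdet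
    exact ((posSemidef_weightedGram ha hu).det_lt_det_add_of_posDef
      (posDef_weightedGram hli hv)).ne hdet
  · have huv : ∀ k l, 0 ≤ (u + v) k l + (u + v) l k := fun k l => by
      simp only [Pi.add_apply]
      linarith [hu k l, hv k l, hv l k]
    rw [det_weightedGram_eq_zero ha hdep hu, det_weightedGram_eq_zero ha hdep huv]

end WeightedGram

end Matrix

theorem det_fisher_eq_det_cov_iff_general
    (n N : ℕ) (hN : 1 ≤ N)
    (lam : Fin n → ℝ) (hpos : ∀ k, 0 < lam k)
    (A : Fin N → Matrix (Fin n) (Fin n) ℂ) (hA : ∀ h, (A h).IsHermitian)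
    (m : ℝ → ℝ → ℝ)
    (hm : ∀ x y : ℝ, 0 < x → 0 < y → 0 < m x y ∧ m x y ≤ (x + y) / 2)
    (ρ : Matrix (Fin n) (Fin n) ℂ)
    (hρ : ρ = Matrix.diagonal fun k => (lam k : ℂ))
    (A₀ : Fin N → Matrix (Fin n) (Fin n) ℂ)
    (hA₀ : ∀ h, A₀ h = A h - (Matrix.trace (ρ * A h)) • (1 : Matrix (Fin n) (Fin n) ℂ))
    (Cov : Matrix (Fin N) (Fin N) ℝ)
    (hCov : ∀ h j, Cov h j = (Matrix.trace (ρ * A₀ h * A₀ j)).re)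
    (G : Matrix (Fin N) (Fin N) ℝ)
    (hG : ∀ h j, G h j = Cov h j -
      ∑ k, ∑ l, m (lam k) (lam l) * (A₀ h k l * (starRingEnd ℂ) (A₀ j k l)).re) :
    G.det = Cov.det ↔ ¬ LinearIndependent ℝ A₀ := by
  have : Nonempty (Fin N) := Fin.pos_iff_nonempty.mp hN
  have hρherm : ρ.IsHermitian := hρ ▸ isHermitian_diagonal_of_self_adjoint _ (by ext; simp)
  have hA₀herm : ∀ h, (A₀ h).IsHermitian := fun h =>
    hA₀ h ▸ hρherm.sub_trace_mul_smul_one (hA h)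
  have hCov' : Cov = weightedGram (fun k _ => lam k) A₀ := by
    ext h j
    rw [hCov, hρ, (hA₀herm j).re_trace_diagonal_mul_mul, weightedGram_apply]
  have hG' : G = weightedGram (fun k l => lam k - m (lam k) (lam l)) A₀ := by
    ext h j
    simp only [hG, hCov', weightedGram_apply, sub_mul, Finset.sum_sub_distrib]
  have hsplit : (fun k _ => lam k) = (fun k l => lam k - m (lam k) (lam l)) +
      fun k l => m (lam k) (lam l) := by
    ext k l
    simp
  rw [hG', hCov', hsplit]
  refine det_weightedGram_eq_det_weightedGram_add_iff hA₀herm (fun k l => ?_)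
    fun k l => (hm _ _ (hpos k) (hpos l)).1
  linarith [(hm _ _ (hpos k) (hpos l)).2, (hm _ _ (hpos l) (hpos k)).2]

/-- With the same setting as the uncertainty-principle inequality
`det G(m) ≤ det Cov`, equality holds if and only if the centered matrices
`(A_1)₀, …, (A_N)₀` are linearly dependent over `ℝ`. -/
theorem det_fisher_eq_det_cov_iff
    (n N : ℕ) (hn : 1 ≤ n) (hN : 1 ≤ N)
    (lam : Fin n → ℝ) (hpos : ∀ k, 0 < lam k) (hsum : ∑ k, lam k = 1)
    (A : Fin N → Matrix (Fin n) (Fin n) ℂ) (hA : ∀ h, (A h).IsHermitian)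
    (m : ℝ → ℝ → ℝ)
    (hm : ∀ x y : ℝ, 0 < x → 0 < y → 0 < m x y ∧ m x y ≤ (x + y) / 2)
    (ρ : Matrix (Fin n) (Fin n) ℂ)
    (hρ : ρ = Matrix.diagonal fun k => (lam k : ℂ))
    (A₀ : Fin N → Matrix (Fin n) (Fin n) ℂ)
    (hA₀ : ∀ h, A₀ h = A h - (Matrix.trace (ρ * A h)) • (1 : Matrix (Fin n) (Fin n) ℂ))
    (Cov : Matrix (Fin N) (Fin N) ℝ)
    (hCov : ∀ h j, Cov h j = (Matrix.trace (ρ * A₀ h * A₀ j)).re)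
    (G : Matrix (Fin N) (Fin N) ℝ)
    (hG : ∀ h j, G h j = Cov h j -
      ∑ k, ∑ l, m (lam k) (lam l) * (A₀ h k l * (starRingEnd ℂ) (A₀ j k l)).re) :
    G.det = Cov.det ↔ ¬ LinearIndependent ℝ A₀ :=
  det_fisher_eq_det_cov_iff_general n N hN lam hpos A hA m hm ρ hρ A₀ hA₀ Cov hCov G hG
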